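/- arXiv:1612.05221 — 4 statements merged into one kernel-verified Lean document; each statement's English description precedes it below -/
import Mathlib

section
/- Let f be a total computable time bound and U_f the associated submachine. Then no program P running on U_f computes BB⁺_f: for every program P there exists N₀ such that for all N ≥ N₀, U_f applied to P with input N is strictly less than BB⁺_f(N). -/
open Nat.Partrec (Code)

/-- The program (code) with index `w` under a fixed universal machine. -/
def codeOf (w : ℕ) : Code := Denumerable.ofNat Code w

/-- `U` halts on the (self-contained) program `w` within `f w` steps. -/
def haltsIn (f : ℕ → ℕ) (w : ℕ) : Bool :=
  (Nat.Partrec.Code.evaln (f w) (codeOf w) 0).isSome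

/-- Output of the time-bounded submachine `U_f` on program `w`:
`0` if `U` does not halt on `w` within `f w` steps, else `U(w) + 1`. -/
def Usub (f : ℕ → ℕ) (w : ℕ) : ℕ :=
  match Nat.Partrec.Code.evaln (f w) (codeOf w) 0 with
  | some y => y + 1
  | none => 0

/-- Busy Beaver Plus for the submachine `U_f`: `1 + max {U_f w : |w| ≤ N}`
(programs of length at most `N` are exactly the `w < 2 ^ N`). -/
def BBp (f : ℕ → ℕ) (N : ℕ) : ℕ := 1 + (Finset.range (2 ^ N)).sup (Usub f)

/-- Partial sums of the time-bounded halting probability: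
`Ω_f(N) = Σ_{|p| ≤ N, p halts within f(p) steps} 2^(-|p|)`. -/
def OmegaN (f : ℕ → ℕ) (N : ℕ) : ℚ :=
  ∑ p ∈ Finset.range (2 ^ N), if haltsIn f p then (2 : ℚ) ^ (-(Nat.size p : ℤ)) else 0


lemma lin_le_pow (K : ℕ) : ∀ L, K + 6 ≤ L → K + 3 * L ≤ 2 ^ L := by
  intro L hL
  induction L, hL using Nat.le_induction with
  | base =>
      have h : K < 2 ^ K := Nat.lt_two_pow_self
      calc K + 3 * (K + 6) = 4 * K + 18 := by ring
        _ ≤ 64 * (K + 1) := by omega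
        _ ≤ 64 * 2 ^ K := by exact Nat.mul_le_mul_left _ h
        _ = 2 ^ (K + 6) := by ring
  | succ L hL ih =>
      have h3 : 3 ≤ 2 ^ L := by
        calc 3 ≤ 2 ^ 6 := by norm_num
          _ ≤ 2 ^ L := Nat.pow_le_pow_right (by norm_num) (by omega)
      calc K + 3 * (L + 1) = (K + 3 * L) + 3 := by ring
        _ ≤ 2 ^ L + 2 ^ L := Nat.add_le_add ih h3
        _ = 2 ^ (L + 1) := by ring

lemma eventually_le (K : ℕ) : ∀ N ≥ 2 ^ (K + 6),
    K + Nat.log 2 N + 2 * Nat.log 2 (Nat.log 2 N + 1) ≤ N := by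
  intro N hN
  have hN1 : 1 ≤ N := le_trans (Nat.one_le_two_pow) hN
  set L := Nat.log 2 N with hLdef
  have hlog_lt : L < N := Nat.log_lt_self 2 (by omega)
  have h2 : Nat.log 2 (L + 1) ≤ L := Nat.log_mono_right (by omega)
  have hL6 : K + 6 ≤ L := (Nat.le_log_iff_pow_le (by norm_num) (by omega)).mpr hN
  have h3 : K + 3 * L ≤ 2 ^ L := lin_le_pow K L hL6
  have h4 : 2 ^ L ≤ N := Nat.pow_log_le_self 2 (by omega)
  omega

/-- no program P running on the submachine U_f computes BB⁺_f:
for every P there is N₀ with U_f(P∘N) < BB⁺_f(N) for all N ≥ N₀. -/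
theorem bbp_sub_uncomputable (f : ℕ → ℕ) (hf : Computable f)
    (pair : ℕ → ℕ → ℕ) (c : ℕ)
    (hlen : ∀ P N, Nat.size (pair P N) ≤
      Nat.size P + c + Nat.log 2 N + 2 * Nat.log 2 (Nat.log 2 N + 1)) :
    ∀ P : ℕ, ∃ N₀ : ℕ, ∀ N ≥ N₀, Usub f (pair P N) < BBp f N := by
  intro P
  refine ⟨2 ^ (Nat.size P + c + 6), fun N hN => ?_⟩
  have hsize : Nat.size (pair P N) ≤ N := by
    have h1 := hlen P N
    have h2 := eventually_le (Nat.size P + c) N hN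
    omega
  have hmem : pair P N ∈ Finset.range (2 ^ N) :=
    Finset.mem_range.mpr (Nat.size_le.mp hsize)
  have hle : Usub f (pair P N) ≤ (Finset.range (2 ^ N)).sup (Usub f) :=
    Finset.le_sup hmem
  unfold BBp
  omega
end

section
/- Chaitin-style incompleteness transfers to submachines: let f be a total computable time bound and let P be a program. If for all N the value U_f(P∘N) (when positive) is an upper bound on U_f(w) for all |w| ≤ N, then P∘N with |P∘N| ≤ N leads to a contradiction; formally, there is no program P such that for all N, U_f(P∘N) ≥ BB⁺_f(N). -/
open Nat.Partrec (Code)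

/-- Chaitin-style incompleteness for submachines: there is no
program P with U_f(P∘N) ≥ BB⁺_f(N) for all N. -/
theorem no_program_reaches_bbp (f : ℕ → ℕ) (hf : Computable f)
    (pair : ℕ → ℕ → ℕ) (c : ℕ)
    (hlen : ∀ P N, Nat.size (pair P N) ≤
      Nat.size P + c + Nat.log 2 N + 2 * Nat.log 2 (Nat.log 2 N + 1)) :
    ¬ ∃ P : ℕ, ∀ N : ℕ, BBp f N ≤ Usub f (pair P N) := by
  rintro ⟨P, hP⟩
  set A := Nat.size P + c with hA
  set k := A + 5 with hk
  set N := 2 ^ k with hN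
  have hlogN : Nat.log 2 N = k := Nat.log_pow one_lt_two k
  have hlogk : Nat.log 2 (k + 1) ≤ k := by
    have : k + 1 ≤ 2 ^ k := Nat.lt_two_pow_self (n := k)
    calc Nat.log 2 (k + 1) ≤ Nat.log 2 (2 ^ k) := Nat.log_mono_right this
      _ = k := Nat.log_pow one_lt_two k
  have hsize : Nat.size (pair P N) ≤ N := by
    have h1 := hlen P N
    have h2 : A + 3 * k ≤ 2 ^ k := by
      have hA2 : A + 1 ≤ 2 ^ A := Nat.lt_two_pow_self (n := A)
      have : 2 ^ A * 32 ≤ 2 ^ k := le_of_eq (by rw [hk, hA, pow_add, pow_add]; ring)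
      nlinarith [Nat.one_le_two_pow (n := A)]
    rw [hlogN] at h1
    omega
  have hlt : pair P N < 2 ^ N := Nat.size_le.mp hsize
  have hsup : Usub f (pair P N) ≤ (Finset.range (2 ^ N)).sup (Usub f) :=
    Finset.le_sup (Finset.mem_range.mpr hlt)
  have := hP N
  rw [BBp] at this
  omega
end

section
/- For all sufficiently large N, any program whose output on the submachine U_f is at least BB⁺_f(N) has length strictly greater than N but such a program of length at most 2N + C exists, where C is a constant independent of N, provided f is the self-referential time bound P**_T∘P_T constructed in the paper; abstractly: there is a total computable time bound g and constant C such that for every N there is a program w with N < |w| ≤ 2N + C and U_g(w) ≥ BB⁺_g(N) + 1. -/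
open Nat.Partrec (Code)

namespace BBaux

open Nat.Partrec.Code

/-- The tower of pair-codes: `C 0 = succ`, `C (t+1) = pair (C t) (C t)`. -/
def C : ℕ → Code
  | 0 => Code.succ
  | t + 1 => Code.pair (C t) (C t)

/-- Numeric encodings of the tower codes. -/
def E : ℕ → ℕ := fun t => Nat.rec 1 (fun _ ih => 4 * Nat.pair ih ih + 4) t

/-- Values of the tower codes on input `0`. -/
def V : ℕ → ℕ
  | 0 => 1
  | t + 1 => Nat.pair (V t) (V t)

lemma pair_self (a : ℕ) : Nat.pair a a = a * a + a + a := by simp [Nat.pair]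

lemma E_zero : E 0 = 1 := rfl

lemma E_succ (t : ℕ) : E (t + 1) = 4 * Nat.pair (E t) (E t) + 4 := rfl

lemma encode_C (t : ℕ) : Encodable.encode (C t) = E t := by
  induction t with
  | zero => rfl
  | succ t ih =>
    show Encodable.encode (Code.pair (C t) (C t)) = E (t + 1)
    rw [E_succ, ← ih]
    simp [encodeCode_eq, encodeCode]
    ring

lemma codeOf_E (t : ℕ) : codeOf (E t) = C t := by
  rw [codeOf, ← encode_C, Denumerable.ofNat_encode]

lemma one_le_E (t : ℕ) : t + 1 ≤ E t := by
  induction t with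
  | zero => simp [E_zero]
  | succ t ih =>
    have h : E t ≤ Nat.pair (E t) (E t) := by rw [pair_self]; nlinarith
    rw [E_succ]; omega

lemma E_inj : Function.Injective E := by
  have hmono : StrictMono E := strictMono_nat_of_lt_succ (fun t => by
    have h : E t ≤ Nat.pair (E t) (E t) := by rw [pair_self]; nlinarith
    rw [E_succ]; omega)
  exact hmono.injective

lemma one_le_V (t : ℕ) : 1 ≤ V t := by
  induction t with
  | zero => simp [V]
  | succ t ih => rw [V, pair_self]; nlinarith

lemma V_gap {a b : ℕ} (h : a < b) : V a + 2 ≤ V b := by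
  induction b with
  | zero => omega
  | succ b ih =>
    have hb : V b + 2 ≤ V (b + 1) := by
      have := one_le_V b
      rw [V, pair_self]; nlinarith
    rcases Nat.lt_succ_iff_lt_or_eq.mp h with h' | h'
    · have := ih h'; omega
    · subst h'; exact hb

/-- The boolean recursion deciding `∃ t ≤ n, E t = w`. -/
def B (w : ℕ) : ℕ → Bool := fun n =>
  Nat.rec (decide (E 0 = w)) (fun t b => b || decide (E (t + 1) = w)) n

lemma B_iff (w n : ℕ) : B w n = true ↔ ∃ t, t ≤ n ∧ E t = w := by
  induction n with
  | zero =>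
    show decide (E 0 = w) = true ↔ _
    simp only [decide_eq_true_eq]
    constructor
    · intro h; exact ⟨0, le_refl _, h⟩
    · rintro ⟨t, ht, h⟩; interval_cases t; exact h
  | succ n ih =>
    show (B w n || decide (E (n + 1) = w)) = true ↔ _
    rw [Bool.or_eq_true, ih]
    simp only [decide_eq_true_eq]
    constructor
    · rintro (⟨t, ht, h⟩ | h)
      · exact ⟨t, by omega, h⟩
      · exact ⟨n + 1, le_refl _, h⟩
    · rintro ⟨t, ht, h⟩
      rcases Nat.lt_succ_iff_lt_or_eq.mp (Nat.lt_succ_of_le ht) with h' | h'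
      · exact Or.inl ⟨t, by omega, h⟩
      · exact Or.inr (h' ▸ h)

/-- The time bound: fuel `1` exactly on the tower encodings. -/
def g : ℕ → ℕ := fun w => cond (B w w) 1 0

lemma g_E (t : ℕ) : g (E t) = 1 := by
  have : B (E t) (E t) = true := (B_iff _ _).mpr ⟨t, by have := one_le_E t; omega, rfl⟩
  simp [g, this]

lemma g_not {w : ℕ} (h : ∀ t, E t ≠ w) : g w = 0 := by
  have : B w w = false := by
    rw [← Bool.not_eq_true, B_iff]
    rintro ⟨t, _, ht⟩; exact h t ht
  simp [g, this]

lemma computable_g : Computable g := by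
  have hstep : Primrec fun p : ℕ × ℕ => 4 * Nat.pair p.2 p.2 + 4 :=
    Primrec.nat_add.comp
      (Primrec.nat_mul.comp (Primrec.const 4)
        (Primrec₂.natPair.comp Primrec.snd Primrec.snd))
      (Primrec.const 4)
  have hE : Primrec E := Primrec.nat_rec₁ 1 hstep.to₂
  have hf : Primrec fun w : ℕ => decide (E 0 = w) :=
    (Primrec.eq.comp (Primrec.const (E 0)) Primrec.id).decide
  have hg : Primrec fun q : ℕ × (ℕ × Bool) => q.2.2 || decide (E (q.2.1 + 1) = q.1) :=
    (Primrec.dom_bool₂ (· || ·)).comp (Primrec.snd.comp Primrec.snd)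
      ((Primrec.eq.comp
        (hE.comp (Primrec.succ.comp (Primrec.fst.comp Primrec.snd)))
        Primrec.fst).decide)
  have hB : Primrec fun w : ℕ => B w w := by
    have h := (Primrec.nat_rec (f := fun w : ℕ => decide (E 0 = w))
      (g := fun (w : ℕ) (p : ℕ × Bool) => p.2 || decide (E (p.1 + 1) = w)) hf hg.to₂)
    exact h.comp Primrec.id Primrec.id
  exact (Primrec.cond hB (Primrec.const 1) (Primrec.const 0)).to_comp

lemma evaln_C (t : ℕ) : evaln 1 (C t) 0 = some (V t) := by
  induction t with
  | zero => simp [C, V, evaln]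
  | succ t ih => simp [C, V, evaln, ih, Seq.seq]

lemma Usub_E (t : ℕ) : Usub g (E t) = V t + 1 := by
  rw [Usub, codeOf_E, g_E, evaln_C]

lemma Usub_not {w : ℕ} (h : ∀ t, E t ≠ w) : Usub g w = 0 := by
  rw [Usub, g_not h]
  simp [evaln]

lemma size_E_strict (t : ℕ) : Nat.size (E t) < Nat.size (E (t + 1)) := by
  apply Nat.lt_size.mpr
  have h1 : 1 ≤ Nat.size (E t) := Nat.size_pos.mpr (by have := one_le_E t; omega)
  have h2 : 2 ^ (Nat.size (E t) - 1) ≤ E t := Nat.lt_size.mp (by omega)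
  have h3 : E (t + 1) ≥ 4 * E t := by
    have : E t ≤ Nat.pair (E t) (E t) := by rw [pair_self]; nlinarith
    rw [E_succ]; omega
  calc 2 ^ Nat.size (E t) = 2 * 2 ^ (Nat.size (E t) - 1) := by
        rw [← pow_succ']; congr 1; omega
    _ ≤ 2 * E t := by omega
    _ ≤ E (t + 1) := by omega

lemma size_E_upper (t : ℕ) : Nat.size (E (t + 1)) ≤ 2 * Nat.size (E t) + 3 := by
  apply Nat.size_le.mpr
  have h1 : E t < 2 ^ Nat.size (E t) := Nat.lt_size_self _
  have h2 : E (t + 1) = 4 * (E t * E t + E t + E t) + 4 := by rw [E_succ, pair_self]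
  calc E (t + 1) ≤ 4 * (E t + 1) * (E t + 1) := by nlinarith
    _ ≤ 4 * 2 ^ Nat.size (E t) * 2 ^ Nat.size (E t) := by
        have : E t + 1 ≤ 2 ^ Nat.size (E t) := h1
        nlinarith
    _ < 2 ^ (2 * Nat.size (E t) + 3) := by
        have h3 : (2:ℕ) ^ (2 * Nat.size (E t) + 3)
            = 2 ^ Nat.size (E t) * 2 ^ Nat.size (E t) * 8 := by
          rw [show 2 * Nat.size (E t) + 3 = Nat.size (E t) + (Nat.size (E t) + 3) by ring,
            pow_add, pow_add]
          ring
        have h4 : 0 < (2:ℕ) ^ Nat.size (E t) := pow_pos (by norm_num) _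
        nlinarith

lemma size_E_mono : StrictMono (fun t => Nat.size (E t)) :=
  strictMono_nat_of_lt_succ size_E_strict

end BBaux

/-- there is a total computable time bound g and a constant C
such that for every N some program w with N < |w| ≤ 2N + C satisfies
U_g(w) ≥ BB⁺_g(N) + 1 (while, by sub-incompressibility, no program of length
≤ N can reach BB⁺_g(N)). -/
theorem bbp_reachable_within_2N :
    ∃ (g : ℕ → ℕ) (C : ℕ), Computable g ∧
      ∀ N : ℕ, ∃ w : ℕ, N < Nat.size w ∧ Nat.size w ≤ 2 * N + C ∧
        BBp g N + 1 ≤ Usub g w := by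
  classical
  refine ⟨BBaux.g, 3, BBaux.computable_g, fun N => ?_⟩
  -- there is some t with N < size (E t)
  have hex : ∃ t, N < Nat.size (BBaux.E t) := by
    refine ⟨N, ?_⟩
    have h : ∀ t, t + 1 ≤ Nat.size (BBaux.E t) := by
      intro t
      induction t with
      | zero => exact Nat.size_pos.mpr (by have := BBaux.one_le_E 0; omega)
      | succ t ih => have := BBaux.size_E_strict t; omega
    have := h N; omega
  obtain ⟨t₀, hspec, hmin⟩ :
      ∃ t, N < Nat.size (BBaux.E t) ∧ ∀ s, s < t → ¬ N < Nat.size (BBaux.E s) :=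
    ⟨Nat.find hex, Nat.find_spec hex, fun s hs => Nat.find_min hex hs⟩
  refine ⟨BBaux.E t₀, hspec, ?_, ?_⟩
  · -- size bound
    cases t₀ with
    | zero => rw [BBaux.E_zero, Nat.size_one]; omega
    | succ t =>
      have hm : ¬ (N < Nat.size (BBaux.E t)) := hmin t (by omega)
      calc Nat.size (BBaux.E (t + 1)) ≤ 2 * Nat.size (BBaux.E t) + 3 := BBaux.size_E_upper t
        _ ≤ 2 * N + 3 := by omega
  · -- value bound
    rw [BBaux.Usub_E, BBp]
    have hsup : (Finset.range (2 ^ N)).sup (Usub BBaux.g) < BBaux.V t₀ := by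
      rw [Finset.sup_lt_iff (lt_of_lt_of_le (by simp) (BBaux.one_le_V t₀) : (⊥ : ℕ) < BBaux.V t₀)]
      intro w hw
      rw [Finset.mem_range] at hw
      by_cases hrange : ∃ t, BBaux.E t = w
      · obtain ⟨t, rfl⟩ := hrange
        rw [BBaux.Usub_E]
        -- size (E t) ≤ N since E t < 2^N, so t < t₀
        have hsz : Nat.size (BBaux.E t) ≤ N := Nat.size_le.mpr hw
        have htlt : t < t₀ := by
          by_contra hc
          push_neg at hc
          have h2 : Nat.size (BBaux.E t₀) ≤ Nat.size (BBaux.E t) := BBaux.size_E_mono.monotone hc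
          omega
        have := BBaux.V_gap htlt
        omega
      · push_neg at hrange
        rw [BBaux.Usub_not hrange]
        have := BBaux.one_le_V t₀; omega
    omega
end

section
/- For every total computable time bound f, the submachine output function w ↦ U_f(w) is itself total computable, and consequently the class of functions computable by programs on U_f is a proper subclass of the total computable functions: there exists a total computable function (namely BB⁺_f) not computable by any program on U_f. -/
open Nat.Partrec (Code)

/-- U_f is total computable, BB⁺_f is total computable, yet
BB⁺_f is not computable by any program running on U_f; hence the class of
functions computable on U_f is a proper subclass of the total computable
functions. -/
theorem submachine_proper_subclass (f : ℕ → ℕ) (hf : Computable f)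
    (pair : ℕ → ℕ → ℕ) (c : ℕ)
    (hlen : ∀ P N, Nat.size (pair P N) ≤
      Nat.size P + c + Nat.log 2 N + 2 * Nat.log 2 (Nat.log 2 N + 1)) :
    Computable (Usub f) ∧ Computable (BBp f) ∧
    ¬ ∃ P : ℕ, ∀ N : ℕ, Usub f (pair P N) = BBp f N + 1 := by
  -- computability of Usub f
  have hev : Computable (fun w : ℕ => Nat.Partrec.Code.evaln (f w) (codeOf w) 0) := by
    have := Nat.Partrec.Code.primrec_evaln.to_comp
    exact this.comp ((hf.pair (Computable.ofNat Code)).pair (Computable.const 0))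
  have hU : Computable (Usub f) := by
    have : Computable (fun w : ℕ =>
        Option.casesOn (motive := fun _ => ℕ)
          (Nat.Partrec.Code.evaln (f w) (codeOf w) 0) 0 (fun y => y + 1)) :=
      Computable.option_casesOn hev (Computable.const 0)
        (Computable.succ.comp Computable.snd).to₂
    exact this.of_eq fun w => by
      unfold Usub; cases Nat.Partrec.Code.evaln (f w) (codeOf w) 0 <;> rfl
  refine ⟨hU, ?_, ?_⟩
  · -- computability of BBp f
    have hsup : Computable (fun n : ℕ => (Finset.range n).sup (Usub f)) := by
      have : Computable (fun n : ℕ =>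
          Nat.rec (motive := fun _ => ℕ) 0
            (fun m ih => max ih (Usub f m)) n) :=
        Computable.nat_rec Computable.id (Computable.const 0)
          ((Primrec.nat_max.to_comp.comp (Computable.snd.comp Computable.snd)
            (hU.comp (Computable.fst.comp Computable.snd))) : Computable _).to₂
      exact this.of_eq fun n => by
        induction n with
        | zero => simp
        | succ m ih =>
          rw [Finset.range_add_one, Finset.sup_insert]
          simp only [ih]
          exact (max_comm _ _)
    have hpow : Computable (fun N : ℕ => 2 ^ N) := by
      have : Computable (fun N : ℕ =>
          Nat.rec (motive := fun _ => ℕ) 1 (fun _ ih => ih * 2) N) :=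
        Computable.nat_rec Computable.id (Computable.const 1)
          ((Primrec.nat_mul.to_comp.comp (Computable.snd.comp Computable.snd)
            (Computable.const 2)) : Computable _).to₂
      exact this.of_eq fun n => by
        induction n with
        | zero => simp
        | succ m ih => simp [pow_succ, ih]
    have : Computable (fun N : ℕ => 1 + (Finset.range (2 ^ N)).sup (Usub f)) :=
      Primrec.nat_add.to_comp.comp (Computable.const 1) (hsup.comp hpow)
    exact this.of_eq fun N => rfl
  · -- proper subclass
    rintro ⟨P, hP⟩
    set K := Nat.size P + c with hK
    have h2K : K < 2 ^ K := (Nat.lt_two_pow_self (n := K))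
    have hlogN : Nat.log 2 (2 ^ (K + 7)) = K + 7 := Nat.log_pow one_lt_two _
    have hlog2 : Nat.log 2 (K + 7 + 1) ≤ K + 3 := by
      have h1 : K + 7 + 1 ≤ 2 ^ (K + 3) := by
        have h8 : (2:ℕ) ^ (K + 3) = 8 * 2 ^ K := by ring
        omega
      calc Nat.log 2 (K + 7 + 1) ≤ Nat.log 2 (2 ^ (K + 3)) := Nat.log_mono_right h1
        _ = K + 3 := Nat.log_pow one_lt_two _
    have hsz : Nat.size (pair P (2 ^ (K + 7))) ≤ 2 ^ (K + 7) := by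
      have h := hlen P (2 ^ (K + 7))
      rw [hlogN] at h
      have h128 : (2:ℕ) ^ (K + 7) = 128 * 2 ^ K := by ring
      omega
    have hlt : pair P (2 ^ (K + 7)) < 2 ^ (2 ^ (K + 7)) :=
      lt_of_lt_of_le (Nat.lt_size_self _) (Nat.pow_le_pow_right (by norm_num) hsz)
    have hle : Usub f (pair P (2 ^ (K + 7))) ≤
        (Finset.range (2 ^ (2 ^ (K + 7)))).sup (Usub f) :=
      Finset.le_sup (Finset.mem_range.2 hlt)
    rw [hP (2 ^ (K + 7))] at hle
    unfold BBp at hle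
    omega
end
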